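/- Let X be a non-empty set, f : X → X a self-map, and x₀ ∈ X a point with f(x₀) ≠ x₀. Suppose f⁻²(x₀) is an uncountable set and f⁻¹(x) is a countable set for every x ∈ X with x ≠ x₀. Then f has no iterative root of any order n ≥ 2; that is, for every n ≥ 2 there is no map g : X → X with gⁿ = f. -/
import Mathlib


/-- **(C3) of Theorem 2 (the tool).** If `f : X → X` satisfies `f x₀ ≠ x₀`,
`f⁻²(x₀)` is uncountable and `f⁻¹(x)` is countable for all `x ≠ x₀`, then `f`
has no iterative root of any order `n ≥ 2`. -/
theorem no_iterative_root_of_uncountable_preimage {X : Type*} [Nonempty X]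
    (f : X → X) (x₀ : X) (hx₀ : f x₀ ≠ x₀)
    (h2 : ¬ ((fun y => f (f y)) ⁻¹' {x₀}).Countable)
    (h1 : ∀ x : X, x ≠ x₀ → (f ⁻¹' {x}).Countable) :
    ∀ n : ℕ, 2 ≤ n → ¬ ∃ g : X → X, g^[n] = f := by
  rintro n hn ⟨g, rfl⟩
  obtain ⟨m, rfl⟩ : ∃ m, n = m + 2 := ⟨n - 2, by omega⟩
  have hcomm : ∀ x : X, (g^[m+2]) (g x) = g ((g^[m+2]) x) := fun x => by
    rw [← Function.iterate_succ_apply, Function.iterate_succ_apply']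
  have hs2 : ∀ x : X, (g^[m+2]) x = (g^[m+1]) (g x) := fun x =>
    Function.iterate_succ_apply g (m+1) x
  have hs1 : ∀ x : X, (g^[m+1]) x = (g^[m]) (g x) := fun x =>
    Function.iterate_succ_apply g m x
  have ht : g x₀ ≠ x₀ := fun h => hx₀ (Function.iterate_fixed h (m+2))
  -- V = f⁻²(x₀)
  set V : Set X := (fun y => (g^[m+2]) ((g^[m+2]) y)) ⁻¹' {x₀} with hVdef
  have hVmem : ∀ y ∈ V, (g^[m+2]) ((g^[m+2]) y) = x₀ := fun y hy => hy
  have hV2 : ∀ y ∈ V, (g^[m+2]) y ≠ x₀ := by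
    intro y hy h
    exact hx₀ ((congrArg (g^[m+2]) h.symm).trans (hVmem y hy))
  -- S = g '' V is uncountable
  set S : Set X := g '' V with hSdef
  have hS : ¬ S.Countable := by
    intro hS
    apply h2
    have hsub : V ⊆ ⋃ z ∈ S, g ⁻¹' {z} := fun y hy =>
      Set.mem_biUnion (Set.mem_image_of_mem g hy) rfl
    refine Set.Countable.mono hsub (hS.biUnion ?_)
    rintro z ⟨y, hy, rfl⟩
    refine Set.Countable.mono ?_ (h1 ((g^[m+2]) y) (hV2 y hy))
    intro w hw
    have hw' : g w = g y := hw
    show (g^[m+2]) w = (g^[m+2]) y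
    rw [hs2, hw', ← hs2]
  -- T = S ∩ f⁻¹(x₀) is uncountable
  set T : Set X := {z ∈ S | (g^[m+2]) z = x₀} with hTdef
  have hfS : ∀ z ∈ S, (g^[m+2]) ((g^[m+2]) z) = g x₀ := by
    rintro z ⟨y, hy, rfl⟩
    rw [hcomm, hcomm, hVmem y hy]
  have hT : ¬ T.Countable := by
    intro hT
    apply hS
    have hdiff : (S \ T).Countable := by
      have hsub : S \ T ⊆ ⋃ w ∈ ((g^[m+2]) ⁻¹' {g x₀} \ {x₀} : Set X),
          (g^[m+2]) ⁻¹' {w} := by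
        rintro z ⟨hzS, hzT⟩
        have hz' : (g^[m+2]) z ≠ x₀ := fun h => hzT ⟨hzS, h⟩
        exact Set.mem_biUnion ⟨hfS z hzS, hz'⟩ rfl
      refine Set.Countable.mono hsub (Set.Countable.biUnion ?_ ?_)
      · exact (h1 (g x₀) ht).mono Set.diff_subset
      · rintro w ⟨-, hw⟩
        exact h1 w hw
    have := hT.union hdiff
    exact this.mono (by intro z hz; by_cases h : z ∈ T
                        · exact Set.mem_union_left _ h
                        · exact Set.mem_union_right _ ⟨hz, h⟩)
  -- T nonempty gives periodicity g^[m+1] x₀ = x₀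
  obtain ⟨z₀, hz₀⟩ : T.Nonempty :=
    Set.nonempty_iff_ne_empty.2 (fun h => hT (h ▸ Set.countable_empty))
  obtain ⟨⟨y₀, hy₀V, rfl⟩, hz₀f⟩ := hz₀
  have hP : (g^[m+1]) x₀ = x₀ := by
    have e1 : x₀ = g ((g^[m+2]) y₀) := by rw [← hcomm, hz₀f]
    rw [e1, ← hs2, hVmem y₀ hy₀V, ← e1]
  -- find u = g z₁ with uncountably many (T ∩ g⁻¹ u)
  have hgT : g '' T ⊆ (g^[m+2]) ⁻¹' {g x₀} := by
    rintro _ ⟨z, hz, rfl⟩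
    show (g^[m+2]) (g z) = g x₀
    rw [hcomm, hz.2]
  have hEx : ¬ ∀ u ∈ g '' T, (T ∩ g ⁻¹' {u}).Countable := by
    intro hall
    apply hT
    have hsub : T ⊆ ⋃ u ∈ g '' T, T ∩ g ⁻¹' {u} := fun z hz =>
      Set.mem_biUnion (Set.mem_image_of_mem g hz) ⟨hz, rfl⟩
    exact Set.Countable.mono hsub
      (Set.Countable.biUnion ((h1 (g x₀) ht).mono hgT) hall)
  push_neg at hEx
  obtain ⟨u, huT, hu⟩ := hEx
  -- R = V ∩ (g∘g)⁻¹(u) is uncountable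
  set R : Set X := {y ∈ V | g (g y) = u} with hRdef
  have hR : ¬ R.Countable := by
    intro hR
    apply hu
    refine Set.Countable.mono ?_ (hR.image g)
    rintro w ⟨⟨⟨y, hyV, rfl⟩, -⟩, hwu⟩
    exact ⟨y, ⟨hyV, hwu⟩, rfl⟩
  -- hence g^[m] u = x₀
  have hu0 : (g^[m]) u = x₀ := by
    by_contra hne
    apply hR
    refine Set.Countable.mono ?_ (h1 _ hne)
    rintro y ⟨hyV, hyu⟩
    show (g^[m+2]) y = (g^[m]) u
    rw [hs2, hs1, hyu]
  -- hence g (g x₀) = g x₀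
  obtain ⟨z₁, hz₁T, rfl⟩ := huT
  have e2 : (g^[m+2]) (g z₁) = g x₀ := by rw [hcomm, hz₁T.2]
  have e3 : (g^[m+2]) (g z₁) = g (g x₀) := by
    rw [show m + 2 = 2 + m from by omega, Function.iterate_add_apply, hu0]
    rfl
  have hgt : g (g x₀) = g x₀ := by rw [← e3, e2]
  -- conclude g x₀ = x₀, contradiction
  apply ht
  calc g x₀ = (g^[m]) (g x₀) := (Function.iterate_fixed hgt m).symm
    _ = (g^[m+1]) x₀ := (Function.iterate_succ_apply g m x₀).symm
    _ = x₀ := hP
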